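/- Suppose a sequence of operators U^k in a Banach algebra satisfies U^{k+1} = e^{W^{k+1}} U^k with ‖e^{W^{k+1}} − I‖ ≤ (13/2)ε_k, ε_k = ε_0^{(5/4)^k}, ε_0 ≤ 1/55, and U^0 = I. Then ‖U^k‖ ≤ 4/3 for all k, and (U^k) is Cauchy with limit U^∞ satisfying ‖U^∞ − I‖ ≤ (130/9)ε_0. -/
import Mathlib


/-- in a Banach algebra, if `U⁰ = I`, `U^{k+1} = e^{W^{k+1}} U^k` with
`‖e^{W^{k+1}} − I‖ ≤ (13/2) ε_k`, `ε_k = ε₀^{(5/4)^k}`, `0 < ε₀ ≤ 1/55`, then `‖U^k‖ ≤ 4/3`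
for all `k`, and `U^k` converges to some `U^∞` with `‖U^∞ − I‖ ≤ (130/9) ε₀`. -/
theorem stmt12 {A : Type*} [NormedRing A] [NormOneClass A] [CompleteSpace A]
    (ε₀ : ℝ) (h0 : 0 < ε₀) (h1 : ε₀ ≤ 1 / 55)
    (U E : ℕ → A)
    (hU0 : U 0 = 1)
    (hrec : ∀ k : ℕ, U (k + 1) = E k * U k)
    (hE : ∀ k : ℕ, ‖E k - 1‖ ≤ 13 / 2 * ε₀ ^ ((5 / 4 : ℝ) ^ k)) :
    (∀ k : ℕ, ‖U k‖ ≤ 4 / 3) ∧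
    ∃ L : A, Filter.Tendsto U Filter.atTop (nhds L) ∧ ‖L - 1‖ ≤ 130 / 9 * ε₀ := by
  set r : ℝ := ε₀ ^ ((1 : ℝ) / 4) with hr
  have hε1 : ε₀ ≤ 1 := h1.trans (by norm_num)
  have hr0 : 0 ≤ r := Real.rpow_nonneg h0.le _
  have hr25 : r ≤ 2 / 5 := by
    have : r ≤ ((16 : ℝ) / 625) ^ ((1 : ℝ) / 4) :=
      Real.rpow_le_rpow h0.le (h1.trans (by norm_num)) (by norm_num)
    calc r ≤ ((16 : ℝ) / 625) ^ ((1 : ℝ) / 4) := this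
      _ = (2 / 5 : ℝ) := by
          rw [show (16 / 625 : ℝ) = (2 / 5 : ℝ) ^ (4 : ℕ) by norm_num,
            ← Real.rpow_natCast (2 / 5 : ℝ) 4, ← Real.rpow_mul (by norm_num)]
          norm_num
  have hr1 : r < 1 := lt_of_le_of_lt hr25 (by norm_num)
  -- ε_k ≤ ε₀ * r ^ k
  have hεk : ∀ k : ℕ, ε₀ ^ ((5 / 4 : ℝ) ^ k) ≤ ε₀ * r ^ k := by
    intro k
    have h1k : (1 : ℝ) + k * (1 / 4) ≤ (5 / 4 : ℝ) ^ k := by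
      have := one_add_mul_le_pow (a := (1 / 4 : ℝ)) (by norm_num) k
      calc (1 : ℝ) + k * (1 / 4) = 1 + (k : ℝ) * (1 / 4) := by ring
        _ ≤ (1 + 1 / 4 : ℝ) ^ k := this
        _ = (5 / 4 : ℝ) ^ k := by norm_num
    have heq : ε₀ * r ^ k = ε₀ ^ ((1 : ℝ) + k * (1 / 4)) := by
      rw [hr, ← Real.rpow_natCast (ε₀ ^ ((1 : ℝ) / 4)) k, ← Real.rpow_mul h0.le,
        Real.rpow_add h0, Real.rpow_one]
      ring_nf
    rw [heq]
    exact Real.rpow_le_rpow_of_exponent_ge h0 hε1 h1k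
  -- partial geometric sums
  have hS : ∀ k : ℕ, ∑ i ∈ Finset.range k, ε₀ * r ^ i ≤ 5 / 3 * ε₀ := by
    intro k
    have hsum : ∑ i ∈ Finset.range k, r ^ i ≤ 5 / 3 := by
      have h25 : ∑ i ∈ Finset.range k, r ^ i ≤ ∑ i ∈ Finset.range k, (2 / 5 : ℝ) ^ i := by
        apply Finset.sum_le_sum
        intro i _
        exact pow_le_pow_left₀ hr0 hr25 i
      have hgeq := geom_sum_eq (by norm_num : (2 / 5 : ℝ) ≠ 1) k
      have hpow : (0 : ℝ) ≤ (2 / 5 : ℝ) ^ k := by positivity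
      have : ∑ i ∈ Finset.range k, (2 / 5 : ℝ) ^ i ≤ 5 / 3 := by
        rw [hgeq]; rw [div_le_iff_of_neg (by norm_num : (2 / 5 : ℝ) - 1 < 0)]
        nlinarith
      linarith
    calc ∑ i ∈ Finset.range k, ε₀ * r ^ i = ε₀ * ∑ i ∈ Finset.range k, r ^ i := by
          rw [Finset.mul_sum]
      _ ≤ ε₀ * (5 / 3) := by
          exact mul_le_mul_of_nonneg_left hsum h0.le
      _ = 5 / 3 * ε₀ := by ring
  -- main induction
  have main : ∀ k : ℕ, ‖U k - 1‖ ≤ 26 / 3 * ∑ i ∈ Finset.range k, ε₀ * r ^ i := by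
    intro k
    induction k with
    | zero => simp [hU0]
    | succ k ih =>
      have hUk : ‖U k‖ ≤ 4 / 3 := by
        have h2 : ‖U k - 1‖ ≤ 130 / 9 * ε₀ := by
          calc ‖U k - 1‖ ≤ 26 / 3 * ∑ i ∈ Finset.range k, ε₀ * r ^ i := ih
            _ ≤ 26 / 3 * (5 / 3 * ε₀) := by
                have := hS k; nlinarith
            _ = 130 / 9 * ε₀ := by ring
        calc ‖U k‖ = ‖(U k - 1) + 1‖ := by congr 1; abel
          _ ≤ ‖U k - 1‖ + ‖(1 : A)‖ := norm_add_le _ _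
          _ ≤ 130 / 9 * ε₀ + 1 := by rw [norm_one]; linarith
          _ ≤ 4 / 3 := by nlinarith
      have hstep : ‖U (k + 1) - U k‖ ≤ 26 / 3 * (ε₀ * r ^ k) := by
        calc ‖U (k + 1) - U k‖ = ‖(E k - 1) * U k‖ := by rw [hrec k]; congr 1; noncomm_ring
          _ ≤ ‖E k - 1‖ * ‖U k‖ := norm_mul_le _ _
          _ ≤ (13 / 2 * (ε₀ * r ^ k)) * (4 / 3) := by
              apply mul_le_mul ((hE k).trans ?_) hUk (norm_nonneg _)
                (by positivity)
              exact mul_le_mul_of_nonneg_left (hεk k) (by norm_num)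
          _ = 26 / 3 * (ε₀ * r ^ k) := by ring
      calc ‖U (k + 1) - 1‖ = ‖(U (k + 1) - U k) + (U k - 1)‖ := by congr 1; abel
        _ ≤ ‖U (k + 1) - U k‖ + ‖U k - 1‖ := norm_add_le _ _
        _ ≤ 26 / 3 * (ε₀ * r ^ k) + 26 / 3 * ∑ i ∈ Finset.range k, ε₀ * r ^ i := by
            linarith
        _ = 26 / 3 * ∑ i ∈ Finset.range (k + 1), ε₀ * r ^ i := by
            rw [Finset.sum_range_succ]; ring
  have hU139 : ∀ k : ℕ, ‖U k - 1‖ ≤ 130 / 9 * ε₀ := by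
    intro k
    calc ‖U k - 1‖ ≤ 26 / 3 * ∑ i ∈ Finset.range k, ε₀ * r ^ i := main k
      _ ≤ 26 / 3 * (5 / 3 * ε₀) := by have := hS k; nlinarith
      _ = 130 / 9 * ε₀ := by ring
  have hUb : ∀ k : ℕ, ‖U k‖ ≤ 4 / 3 := by
    intro k
    calc ‖U k‖ = ‖(U k - 1) + 1‖ := by congr 1; abel
      _ ≤ ‖U k - 1‖ + ‖(1 : A)‖ := norm_add_le _ _
      _ ≤ 130 / 9 * ε₀ + 1 := by rw [norm_one]; linarith [hU139 k]
      _ ≤ 4 / 3 := by nlinarith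
  refine ⟨hUb, ?_⟩
  have hdiff : ∀ k : ℕ, ‖U (k + 1) - U k‖ ≤ 26 / 3 * ε₀ * r ^ k := by
    intro k
    calc ‖U (k + 1) - U k‖ = ‖(E k - 1) * U k‖ := by rw [hrec k]; congr 1; noncomm_ring
      _ ≤ ‖E k - 1‖ * ‖U k‖ := norm_mul_le _ _
      _ ≤ (13 / 2 * (ε₀ * r ^ k)) * (4 / 3) := by
          apply mul_le_mul ((hE k).trans ?_) (hUb k) (norm_nonneg _) (by positivity)
          exact mul_le_mul_of_nonneg_left (hεk k) (by norm_num)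
      _ = 26 / 3 * ε₀ * r ^ k := by ring
  have hsummable : Summable (fun k : ℕ => ‖U (k + 1) - U k‖) := by
    apply Summable.of_nonneg_of_le (fun k => norm_nonneg _) hdiff
    exact (summable_geometric_of_lt_one hr0 hr1).mul_left _
  have hcauchy : CauchySeq U := by
    apply cauchySeq_of_summable_dist
    simpa [dist_eq_norm, norm_sub_rev] using hsummable
  obtain ⟨L, hL⟩ := cauchySeq_tendsto_of_complete hcauchy
  refine ⟨L, hL, ?_⟩
  have htend : Filter.Tendsto (fun k => ‖U k - 1‖) Filter.atTop (nhds ‖L - 1‖) :=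
    ((hL.sub tendsto_const_nhds).norm)
  exact le_of_tendsto' htend hU139
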